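/- arXiv:1008.3217 — 2 statements merged into one kernel-verified Lean document; each statement's English description precedes it below -/
import Mathlib

section
/- Let m, n be natural numbers and G an L_(m,n)-graph. Then the signed edge domination number of G satisfies γ'_s(G) ≤ (mn+m+1)(m−mn)/2. -/
open scoped Classical

noncomputable def edgeFin {V : Type*} [Fintype V] (G : SimpleGraph V) : Finset (Sym2 V) :=
  Finset.univ.filter (· ∈ G.edgeSet)

noncomputable def closedNbhd {V : Type*} [Fintype V] (G : SimpleGraph V) (e : Sym2 V) :
    Finset (Sym2 V) :=
  (edgeFin G).filter (fun e' => ∃ v, v ∈ e ∧ v ∈ e')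

def IsSEDF {V : Type*} [Fintype V] (G : SimpleGraph V) (f : Sym2 V → ℤ) : Prop :=
  (∀ e ∈ edgeFin G, f e = 1 ∨ f e = -1) ∧
  ∀ e ∈ edgeFin G, 1 ≤ ∑ e' ∈ closedNbhd G e, f e'

noncomputable def vsum {V : Type*} [Fintype V] (G : SimpleGraph V) (f : Sym2 V → ℤ) (v : V) : ℤ :=
  ∑ e ∈ (edgeFin G).filter (fun e => v ∈ e), f e

noncomputable def gammaS {V : Type*} [Fintype V] (G : SimpleGraph V) : ℤ :=
  sInf {z : ℤ | ∃ f, IsSEDF G f ∧ z = ∑ e ∈ edgeFin G, f e}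

def IsLGraph {V : Type*} [Fintype V] (m n : ℕ) (G : SimpleGraph V) : Prop :=
  Fintype.card V = (n + 1) * (m * n + m + 1) ∧
  ∃ P : Fin (n + 1) → Finset V,
    (∀ v : V, ∃! i, v ∈ P i) ∧
    (∀ i, (P i).card = m * n + m + 1) ∧
    (∀ u ∈ P 0, ∀ v ∈ P 0, u ≠ v → G.Adj u v) ∧
    (∀ i, i ≠ 0 → ∀ u ∈ P i, ∀ v ∈ P i, ¬ G.Adj u v) ∧
    (∀ i, i ≠ 0 → ∀ v ∈ P i, ((P 0).filter (G.Adj v)).card = m) ∧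
    (∀ i, i ≠ 0 → ∀ v ∈ P 0, ((P i).filter (G.Adj v)).card = m) ∧
    (∀ i j, i ≠ 0 → j ≠ 0 → i ≠ j → ∀ u ∈ P i, ∀ v ∈ P j, ¬ G.Adj u v)

def MConnected {V : Type*} [Fintype V] (m : ℕ) (G : SimpleGraph V) : Prop :=
  m < Fintype.card V ∧
  ∀ S : Finset V, S.card < m → (G.induce ((↑S : Set V)ᶜ)).Connected

def IsElementary {V : Type*} (H : SimpleGraph V) : Prop :=
  (∀ v, (H.neighborSet v).ncard ≤ 2) ∧
  ∀ v, (H.neighborSet v).ncard = 1 → ∀ w, H.Adj v w → (H.neighborSet w).ncard = 1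

/-
Label an edge `+1` when both ends lie in the clique `V₁` and `-1` otherwise. Every vertex of `V₁`
then sees `mn + m` positive and `nm` negative edges, every other vertex sees `m` negative edges, so
the signed degree is `m` on `V₁` and `-m` elsewhere. The closed neighbourhood sum of an edge `uv` is
the sum of the signed degrees of `u` and `v` minus the label of `uv`, which is `2m - 1 ≥ 1` inside
`V₁` and `1` across. Summing signed degrees counts each edge twice, so the weight of this SEDF is
`((mn + m + 1) m - n (mn + m + 1) m) / 2`.
-/

open Finset

section SignedEdgeDomination

variable {V : Type*} [Fintype V] {G : SimpleGraph V}

lemma mem_edgeFin {e : Sym2 V} : e ∈ edgeFin G ↔ e ∈ G.edgeSet := by simp [edgeFin]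

lemma filter_mem_edgeFin_eq_image (v : V) :
    (edgeFin G).filter (fun e => v ∈ e) = (G.neighborFinset v).image (fun w => s(v, w)) := by
  ext e
  simp only [mem_filter, mem_edgeFin, mem_image, SimpleGraph.mem_neighborFinset]
  constructor
  · rintro ⟨he, hv⟩
    induction e using Sym2.ind with
    | _ a b =>
      rw [SimpleGraph.mem_edgeSet] at he
      rcases Sym2.mem_iff.mp hv with rfl | rfl
      · exact ⟨b, he, rfl⟩
      · exact ⟨a, he.symm, Sym2.eq_swap⟩
  · rintro ⟨w, hw, rfl⟩
    exact ⟨(SimpleGraph.mem_edgeSet G).mpr hw, Sym2.mem_mk_left v w⟩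

lemma vsum_eq_sum_neighborFinset (f : Sym2 V → ℤ) (v : V) :
    vsum G f v = ∑ w ∈ G.neighborFinset v, f s(v, w) := by
  rw [vsum, filter_mem_edgeFin_eq_image, sum_image]
  intro a _ b _ h
  rcases Sym2.eq_iff.mp h with ⟨_, h⟩ | ⟨h₁, h₂⟩
  exacts [h, h₂.trans h₁]

lemma sum_vsum_eq_two_mul (f : Sym2 V → ℤ) :
    ∑ v, vsum G f v = 2 * ∑ e ∈ edgeFin G, f e := by
  simp only [vsum, sum_filter]
  rw [sum_comm, mul_sum]
  refine sum_congr rfl fun e he => ?_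
  induction e using Sym2.ind with
  | _ a b =>
    have hab : a ≠ b := ((SimpleGraph.mem_edgeSet G).mp (mem_edgeFin.mp he)).ne
    have hends : univ.filter (fun v => v ∈ s(a, b)) = {a, b} := by
      ext x; simp [Sym2.mem_iff]
    rw [← sum_filter, hends, sum_pair hab, two_mul]

lemma two_mul_sum_edgeFin_eq {f : Sym2 V → ℤ} {A : Finset V} {c : ℤ}
    (hin : ∀ v ∈ A, vsum G f v = c) (hout : ∀ v ∉ A, vsum G f v = -c) :
    2 * ∑ e ∈ edgeFin G, f e = c * #A - c * #Aᶜ := by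
  rw [← sum_vsum_eq_two_mul, ← sum_add_sum_compl A, sum_congr rfl hin,
    sum_congr rfl fun v hv => hout v (mem_compl.mp hv), sum_const, sum_const]
  simp only [nsmul_eq_mul]
  ring

/-- Inclusion–exclusion: the closed neighbourhood of `uv` is the union of the edges at `u` and the
edges at `v`, which meet exactly in `uv`. -/
lemma sum_closedNbhd_eq (f : Sym2 V → ℤ) {u v : V} (h : G.Adj u v) :
    ∑ e ∈ closedNbhd G s(u, v), f e = vsum G f u + vsum G f v - f s(u, v) := by
  have hunion : closedNbhd G s(u, v) =
      (edgeFin G).filter (fun e => u ∈ e) ∪ (edgeFin G).filter (fun e => v ∈ e) := by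
    ext e
    simp only [closedNbhd, mem_filter, mem_union]
    constructor
    · rintro ⟨he, x, hx, hxe⟩
      rcases Sym2.mem_iff.mp hx with rfl | rfl
      exacts [Or.inl ⟨he, hxe⟩, Or.inr ⟨he, hxe⟩]
    · rintro (⟨he, hx⟩ | ⟨he, hx⟩)
      exacts [⟨he, u, Sym2.mem_mk_left u v, hx⟩, ⟨he, v, Sym2.mem_mk_right u v, hx⟩]
  have hinter : (edgeFin G).filter (fun e => u ∈ e) ∩ (edgeFin G).filter (fun e => v ∈ e)
      = {s(u, v)} := by
    ext e
    simp only [mem_inter, mem_filter, mem_singleton]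
    constructor
    · rintro ⟨⟨_, hu⟩, _, hv⟩
      exact (Sym2.mem_and_mem_iff h.ne).mp ⟨hu, hv⟩
    · rintro rfl
      have he : s(u, v) ∈ edgeFin G := mem_edgeFin.mpr h
      exact ⟨⟨he, Sym2.mem_mk_left u v⟩, he, Sym2.mem_mk_right u v⟩
  have hsum := sum_union_inter (s₁ := (edgeFin G).filter (fun e => u ∈ e))
    (s₂ := (edgeFin G).filter (fun e => v ∈ e)) (f := f)
  rw [hinter, sum_singleton] at hsum
  rw [hunion, vsum, vsum]
  linarith

lemma isSEDF_of_lt_vsum_add_vsum {f : Sym2 V → ℤ} (hf : ∀ e, f e = 1 ∨ f e = -1)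
    (hlt : ∀ u v, G.Adj u v → f s(u, v) < vsum G f u + vsum G f v) : IsSEDF G f := by
  refine ⟨fun e _ => hf e, fun e he => ?_⟩
  induction e using Sym2.ind with
  | _ u v =>
    have hadj : G.Adj u v := (SimpleGraph.mem_edgeSet G).mp (mem_edgeFin.mp he)
    rw [sum_closedNbhd_eq f hadj]
    linarith [hlt u v hadj]

lemma gammaS_le_of_isSEDF {f : Sym2 V → ℤ} (hf : IsSEDF G f) :
    gammaS G ≤ ∑ e ∈ edgeFin G, f e := by
  refine csInf_le ⟨-#(edgeFin G), ?_⟩ ⟨f, hf, rfl⟩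
  rintro z ⟨g, hg, rfl⟩
  calc (-#(edgeFin G) : ℤ) = ∑ _e ∈ edgeFin G, (-1 : ℤ) := by simp
    _ ≤ ∑ e ∈ edgeFin G, g e :=
      sum_le_sum fun e he => by rcases hg.1 e he with h | h <;> simp [h]

end SignedEdgeDomination

section InsideSign

variable {V : Type*} [Fintype V] {G : SimpleGraph V}

noncomputable def insideSign (A : Finset V) (e : Sym2 V) : ℤ := if ∀ x ∈ e, x ∈ A then 1 else -1

lemma insideSign_mk (A : Finset V) (u w : V) :
    insideSign A s(u, w) = if u ∈ A ∧ w ∈ A then 1 else -1 := by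
  simp only [insideSign, Sym2.forall_mem_pair]

lemma insideSign_eq_one_or (A : Finset V) (e : Sym2 V) :
    insideSign A e = 1 ∨ insideSign A e = -1 := by
  unfold insideSign; split_ifs <;> simp

lemma vsum_insideSign_of_notMem {A : Finset V} {v : V} (hv : v ∉ A) :
    vsum G (insideSign A) v = -G.degree v := by
  rw [vsum_eq_sum_neighborFinset, sum_congr rfl fun w _ => by
    rw [insideSign_mk, if_neg fun h => hv h.1], sum_const, SimpleGraph.card_neighborFinset_eq_degree]
  simp

lemma vsum_insideSign_of_mem {A : Finset V} (hA : G.IsClique (A : Set V)) {v : V} (hv : v ∈ A) :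
    vsum G (insideSign A) v = (#A - 1 : ℤ) - #((G.neighborFinset v).filter (· ∉ A)) := by
  rw [vsum_eq_sum_neighborFinset, ← sum_filter_add_sum_filter_not _ (· ∈ A)]
  have hin : (G.neighborFinset v).filter (· ∈ A) = A.erase v := by
    ext w
    simp only [SimpleGraph.mem_neighborFinset, mem_filter, mem_erase]
    exact ⟨fun ⟨hadj, hw⟩ => ⟨hadj.ne', hw⟩, fun ⟨hne, hw⟩ => ⟨hA hv hw hne.symm, hw⟩⟩
  have hpos : ∀ w ∈ (G.neighborFinset v).filter (· ∈ A), insideSign A s(v, w) = 1 :=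
    fun w hw => by rw [insideSign_mk, if_pos ⟨hv, (mem_filter.mp hw).2⟩]
  have hneg : ∀ w ∈ (G.neighborFinset v).filter (· ∉ A), insideSign A s(v, w) = -1 :=
    fun w hw => by rw [insideSign_mk, if_neg fun h => (mem_filter.mp hw).2 h.2]
  rw [sum_congr rfl hpos, sum_congr rfl hneg, sum_const, sum_const, hin, card_erase_of_mem hv]
  have : 1 ≤ #A := card_pos.mpr ⟨v, hv⟩
  simp [Nat.cast_sub this]
  ring

lemma isSEDF_insideSign {A : Finset V} {c : ℤ} (hcover : ∀ u v, G.Adj u v → u ∈ A ∨ v ∈ A)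
    (hin : ∀ v ∈ A, vsum G (insideSign A) v = c) (hout : ∀ v ∉ A, vsum G (insideSign A) v = -c)
    (hc : 1 < #A → 1 ≤ c) : IsSEDF G (insideSign A) := by
  refine isSEDF_of_lt_vsum_add_vsum (insideSign_eq_one_or A) fun u v huv => ?_
  rw [insideSign_mk]
  by_cases hu : u ∈ A <;> by_cases hv : v ∈ A
  · have := hc (one_lt_card.mpr ⟨u, hu, v, hv, huv.ne⟩)
    rw [if_pos ⟨hu, hv⟩, hin u hu, hin v hv]
    linarith
  · rw [if_neg fun h => hv h.2, hin u hu, hout v hv]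
    linarith
  · rw [if_neg fun h => hu h.1, hout u hu, hin v hv]
    linarith
  · exact ((hcover u v huv).elim hu hv).elim

end InsideSign

section LGraph

variable {V : Type*} {G : SimpleGraph V} {m n : ℕ} {P : Fin (n + 1) → Finset V}

lemma not_adj_of_notMem_part_zero (hpart : ∀ v : V, ∃! i, v ∈ P i)
    (hindep : ∀ i, i ≠ 0 → ∀ u ∈ P i, ∀ v ∈ P i, ¬ G.Adj u v)
    (hcross : ∀ i j, i ≠ 0 → j ≠ 0 → i ≠ j → ∀ u ∈ P i, ∀ v ∈ P j, ¬ G.Adj u v)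
    {u v : V} (hu : u ∉ P 0) (hv : v ∉ P 0) : ¬ G.Adj u v := by
  obtain ⟨i, hui, -⟩ := hpart u
  obtain ⟨j, hvj, -⟩ := hpart v
  have hi : i ≠ 0 := by rintro rfl; exact hu hui
  have hj : j ≠ 0 := by rintro rfl; exact hv hvj
  by_cases hij : i = j
  · subst hij; exact hindep i hi u hui v hvj
  · exact hcross i j hi hj hij u hui v hvj

lemma degree_eq_of_notMem_part_zero [Fintype V] (hpart : ∀ v : V, ∃! i, v ∈ P i)
    (hindep : ∀ i, i ≠ 0 → ∀ u ∈ P i, ∀ v ∈ P i, ¬ G.Adj u v)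
    (hcross : ∀ i j, i ≠ 0 → j ≠ 0 → i ≠ j → ∀ u ∈ P i, ∀ v ∈ P j, ¬ G.Adj u v)
    (hdeg : ∀ i, i ≠ 0 → ∀ v ∈ P i, ((P 0).filter (G.Adj v)).card = m)
    {v : V} (hv : v ∉ P 0) : G.degree v = m := by
  obtain ⟨i, hvi, -⟩ := hpart v
  have hi : i ≠ 0 := by rintro rfl; exact hv hvi
  have hnbr : G.neighborFinset v = (P 0).filter (G.Adj v) := by
    ext w
    simp only [SimpleGraph.mem_neighborFinset, mem_filter]
    refine ⟨fun hadj => ⟨?_, hadj⟩, And.right⟩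
    by_contra hw
    exact not_adj_of_notMem_part_zero hpart hindep hcross hv hw hadj
  rw [← SimpleGraph.card_neighborFinset_eq_degree, hnbr, hdeg i hi v hvi]

lemma card_neighborFinset_filter_notMem_part_zero [Fintype V] (hpart : ∀ v : V, ∃! i, v ∈ P i)
    (hdeg : ∀ i, i ≠ 0 → ∀ v ∈ P 0, ((P i).filter (G.Adj v)).card = m)
    {v : V} (hv : v ∈ P 0) : #((G.neighborFinset v).filter (· ∉ P 0)) = n * m := by
  have hsplit : (G.neighborFinset v).filter (· ∉ P 0) =
      (univ.erase 0).biUnion fun i => (P i).filter (G.Adj v) := by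
    ext w
    simp only [SimpleGraph.mem_neighborFinset, mem_filter, mem_biUnion, mem_erase, mem_univ,
      and_true]
    constructor
    · rintro ⟨hadj, hw⟩
      obtain ⟨j, hwj, -⟩ := hpart w
      exact ⟨j, by rintro rfl; exact hw hwj, hwj, hadj⟩
    · rintro ⟨j, hj, hwj, hadj⟩
      exact ⟨hadj, fun hw0 => hj ((hpart w).unique hwj hw0)⟩
  rw [hsplit, card_biUnion fun i _ j _ hij => disjoint_left.mpr fun w hwi hwj =>
    hij ((hpart w).unique (mem_filter.mp hwi).1 (mem_filter.mp hwj).1)]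
  rw [sum_congr rfl fun i hi => hdeg i (mem_erase.mp hi).1 v hv, sum_const,
    card_erase_of_mem (mem_univ _), card_univ, Fintype.card_fin, smul_eq_mul, Nat.add_sub_cancel]

lemma IsLGraph.exists_clique_core [Fintype V] (hG : IsLGraph m n G) :
    ∃ A : Finset V, #A = m * n + m + 1 ∧ #Aᶜ = n * (m * n + m + 1) ∧ G.IsClique (A : Set V) ∧
      (∀ u v, G.Adj u v → u ∈ A ∨ v ∈ A) ∧ (∀ v ∉ A, G.degree v = m) ∧
      ∀ v ∈ A, #((G.neighborFinset v).filter (· ∉ A)) = n * m := by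
  obtain ⟨hcardV, P, hpart, hcard, hclique, hindep, hdegOut, hdegIn, hcross⟩ := hG
  refine ⟨P 0, hcard 0, ?_, fun u hu v hv huv => hclique u hu v hv huv, fun u v huv => ?_,
    fun v hv => degree_eq_of_notMem_part_zero hpart hindep hcross hdegOut hv,
    fun v hv => card_neighborFinset_filter_notMem_part_zero hpart hdegIn hv⟩
  · rw [card_compl, hcardV, hcard 0, Nat.add_one_mul, Nat.add_sub_cancel]
  · by_contra! h
    exact not_adj_of_notMem_part_zero hpart hindep hcross h.1 h.2 huv

end LGraph

theorem stmt4 {V : Type*} [Fintype V] (m n : ℕ) (G : SimpleGraph V)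
    (hG : IsLGraph m n G) :
    (gammaS G : ℚ) ≤ ((m : ℚ) * n + m + 1) * ((m : ℚ) - m * n) / 2 := by
  obtain ⟨A, hA, hAc, hclique, hcover, hdegOut, hdegIn⟩ := hG.exists_clique_core
  have hin : ∀ v ∈ A, vsum G (insideSign A) v = m := fun v hv => by
    rw [vsum_insideSign_of_mem hclique hv, hA, hdegIn v hv]
    push_cast
    ring
  have hout : ∀ v ∉ A, vsum G (insideSign A) v = -m := fun v hv => by
    rw [vsum_insideSign_of_notMem hv, hdegOut v hv]
  have hm : 1 < #A → 1 ≤ (m : ℤ) := fun h => by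
    rw [hA] at h
    have : m ≠ 0 := by rintro rfl; simp at h
    omega
  have hle : gammaS G ≤ ∑ e ∈ edgeFin G, insideSign A e :=
    gammaS_le_of_isSEDF (isSEDF_insideSign hcover hin hout hm)
  have htotal := two_mul_sum_edgeFin_eq hin hout
  rw [hA, hAc] at htotal
  generalize ∑ e ∈ edgeFin G, insideSign A e = S at hle htotal
  have hleQ : (gammaS G : ℚ) ≤ S := by exact_mod_cast hle
  have htotalQ : 2 * (S : ℚ) = ((m : ℚ) * n + m + 1) * ((m : ℚ) - m * n) := by
    rw [← Int.cast_two, ← Int.cast_mul, htotal]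
    push_cast
    ring
  linarith
end

section
/- Let m ≤ n be odd natural numbers. Then γ'_s(K_{m,n}) = min(2m − 1, n). -/
open scoped Classical

/-!
Write a signed edge dominating function of `K_{m,n}` as an `m × n` matrix `g` of signs. The closed
neighbourhood of an edge is its row together with its column, so the condition reads
`row i + col j - g i j ≥ 1`. If every column sum is positive, the total is at least `n`. Otherwise
the sum `C` of some column `j₀` is negative, hence `C ≤ -1` because `m` is odd, and every row sum is
at least `1 + g i j₀ - C`; summing over the rows gives at least `m - (m - 1) C ≥ 2m - 1`.

Both bounds are attained. For `n ≤ 2m - 1` a circulant `m × m` block followed by pairs of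
mirror-image columns has all column sums `1` and all row sums positive. For `n ≥ 2m + 1` the
equality case of the argument above dictates the shape: a few columns of sum `-1`, `(m - 1) / 2`
rows of sum `3` and `(m + 1) / 2` rows of sum `1`.
-/

open Finset

lemma odd_sum_of_forall_eq_one_or_eq_neg_one {ι : Type*} {s : Finset ι} {f : ι → ℤ}
    (hs : Odd #s) (hf : ∀ i ∈ s, f i = 1 ∨ f i = -1) : Odd (∑ i ∈ s, f i) := by
  have h : ∑ i ∈ s, f i ≡ ∑ _i ∈ s, 1 [ZMOD 2] :=
    Int.ModEq.sum fun i hi => by rcases hf i hi with h | h <;> rw [h]; decide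
  rw [sum_const, nsmul_one] at h
  exact Int.odd_iff.mpr (Eq.trans h (Int.odd_iff.mp (by exact_mod_cast hs)))

section SEDFMatrix

variable {α β : Type*} [Fintype α] [Fintype β]

/-- Characterises the matrices `g i j = f s(inl i, inr j)` of the signed edge dominating functions
`f` of `completeBipartiteGraph α β`: the closed neighbourhood of an edge is its row and column. -/
def IsSEDFMatrix (g : α → β → ℤ) : Prop :=
  (∀ i j, g i j = 1 ∨ g i j = -1) ∧ ∀ i j, 1 ≤ ∑ j', g i j' + ∑ i', g i' j - g i j

lemma IsSEDFMatrix.of_one_le_sums {g : α → β → ℤ} (hsign : ∀ i j, g i j = 1 ∨ g i j = -1)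
    (hrow : ∀ i, 1 ≤ ∑ j, g i j) (hcol : ∀ j, 1 ≤ ∑ i, g i j) : IsSEDFMatrix g :=
  ⟨hsign, fun i j => by have := hrow i; have := hcol j; rcases hsign i j with h | h <;> omega⟩

lemma IsSEDFMatrix.comp_equiv {α' β' : Type*} [Fintype α'] [Fintype β'] {g : α → β → ℤ}
    (hg : IsSEDFMatrix g) (e : α' ≃ α) (e' : β' ≃ β) :
    IsSEDFMatrix fun i j => g (e i) (e' j) := by
  refine ⟨fun i j => hg.1 _ _, fun i j => ?_⟩
  rw [e'.sum_comp fun j' => g (e i) j', e.sum_comp fun i' => g i' (e' j)]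
  exact hg.2 _ _

lemma IsSEDFMatrix.exists_fin {g : α → β → ℤ} (hg : IsSEDFMatrix g) {m n : ℕ}
    (hα : Fintype.card α = m) (hβ : Fintype.card β = n) :
    ∃ g' : Fin m → Fin n → ℤ, IsSEDFMatrix g' ∧ ∑ i, ∑ j, g' i j = ∑ i, ∑ j, g i j := by
  let e := (Fintype.equivFinOfCardEq hα).symm
  let e' := (Fintype.equivFinOfCardEq hβ).symm
  refine ⟨fun i j => g (e i) (e' j), hg.comp_equiv e e', ?_⟩
  calc ∑ i, ∑ j, g (e i) (e' j) = ∑ i, ∑ j, g (e i) j :=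
        sum_congr rfl fun i _ => e'.sum_comp (g (e i))
    _ = ∑ i, ∑ j, g i j := e.sum_comp fun i => ∑ j, g i j

lemma IsSEDFMatrix.min_le_sum {g : α → β → ℤ} (hg : IsSEDFMatrix g)
    (hα : Odd (Fintype.card α)) :
    min (2 * (Fintype.card α : ℤ) - 1) (Fintype.card β) ≤ ∑ i, ∑ j, g i j := by
  by_cases hcol : ∀ j, 1 ≤ ∑ i, g i j
  · calc min (2 * (Fintype.card α : ℤ) - 1) (Fintype.card β) ≤ ∑ _j : β, (1 : ℤ) := by simp
      _ ≤ ∑ j, ∑ i, g i j := sum_le_sum fun j _ => hcol j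
      _ = ∑ i, ∑ j, g i j := sum_comm
  simp only [not_forall, not_le] at hcol
  obtain ⟨j₀, hj₀⟩ := hcol
  set C := ∑ i, g i j₀
  have hC : C ≤ -1 := by
    obtain ⟨c, hc⟩ := odd_sum_of_forall_eq_one_or_eq_neg_one hα fun i _ => hg.1 i j₀
    omega
  have hrow : ∀ i, 1 + g i j₀ - C ≤ ∑ j, g i j := fun i => by linarith [hg.2 i j₀]
  have hα₁ : (1 : ℤ) ≤ Fintype.card α := by exact_mod_cast hα.pos
  calc min (2 * (Fintype.card α : ℤ) - 1) (Fintype.card β) ≤ 2 * (Fintype.card α : ℤ) - 1 :=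
        min_le_left _ _
    _ ≤ Fintype.card α - (Fintype.card α - 1) * C := by nlinarith
    _ = ∑ i, (1 + g i j₀ - C) := by
      simp only [sum_sub_distrib, sum_add_distrib, sum_const, card_univ, nsmul_eq_mul, mul_one, C]
      ring
    _ ≤ ∑ i, ∑ j, g i j := sum_le_sum fun i _ => hrow i

end SEDFMatrix

section CompleteBipartite

variable {α β : Type*}

def bipartiteEdge : α × β ↪ Sym2 (α ⊕ β) :=
  ⟨fun p => s(.inl p.1, .inr p.2), by rintro ⟨i, j⟩ ⟨i', j'⟩ h; simpa using h⟩

@[simp]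
lemma bipartiteEdge_apply (p : α × β) : bipartiteEdge p = s(.inl p.1, .inr p.2) := rfl

def edgeFunOfMatrix (g : α → β → ℤ) : Sym2 (α ⊕ β) → ℤ :=
  Sym2.lift ⟨fun u v => match u, v with
    | .inl i, .inr j | .inr j, .inl i => g i j
    | _, _ => 0, by rintro (i | j) (i' | j') <;> rfl⟩

variable [Fintype α] [Fintype β]

lemma sum_filter_fst_eq_or_snd_eq {M : Type*} [AddCommGroup M] (h : α × β → M) (i : α) (j : β) :
    ∑ q with q.1 = i ∨ q.2 = j, h q = ∑ j', h (i, j') + ∑ i', h (i', j) - h (i, j) := by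
  have hunion := sum_union_inter (s₁ := {q : α × β | q.1 = i}) (s₂ := {q | q.2 = j}) (f := h)
  rw [← filter_or, ← filter_and] at hunion
  have hpt : ({q | q.1 = i ∧ q.2 = j} : Finset (α × β)) = {(i, j)} := by
    ext q; simp [Prod.ext_iff]
  have hrow : ({q | q.1 = i} : Finset (α × β)) = {i} ×ˢ univ := by ext ⟨a, b⟩; simp [eq_comm]
  have hcol : ({q | q.2 = j} : Finset (α × β)) = univ ×ˢ {j} := by ext ⟨a, b⟩; simp [eq_comm]
  rw [hpt, hrow, hcol, sum_product, sum_product_right, sum_singleton, sum_singleton,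
    sum_singleton] at hunion
  rw [eq_sub_iff_add_eq, hunion]

lemma edgeFin_completeBipartiteGraph :
    edgeFin (completeBipartiteGraph α β) = univ.map bipartiteEdge := by
  ext e
  simp [edgeFin, SimpleGraph.edgeSet_completeBipartiteGraph]

lemma closedNbhd_completeBipartiteGraph (i : α) (j : β) :
    closedNbhd (completeBipartiteGraph α β) (bipartiteEdge (i, j)) =
      ({q | q.1 = i ∨ q.2 = j} : Finset (α × β)).map bipartiteEdge := by
  ext e
  simp only [closedNbhd, edgeFin_completeBipartiteGraph, mem_filter, mem_map, mem_univ,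
    true_and, bipartiteEdge_apply]
  constructor
  · rintro ⟨⟨⟨a, b⟩, rfl⟩, v, hv, hv'⟩
    simp only [Sym2.mem_iff] at hv hv'
    rcases hv with rfl | rfl <;> simp_all
  · rintro ⟨⟨a, b⟩, hab, rfl⟩
    rcases hab with rfl | rfl
    · exact ⟨⟨_, rfl⟩, .inl a, by simp, by simp⟩
    · exact ⟨⟨_, rfl⟩, .inr b, by simp, by simp⟩

lemma sum_edgeFin_completeBipartiteGraph (f : Sym2 (α ⊕ β) → ℤ) :
    ∑ e ∈ edgeFin (completeBipartiteGraph α β), f e = ∑ i, ∑ j, f (bipartiteEdge (i, j)) := by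
  rw [edgeFin_completeBipartiteGraph, sum_map, Fintype.sum_prod_type]

lemma isSEDF_completeBipartiteGraph_iff (f : Sym2 (α ⊕ β) → ℤ) :
    IsSEDF (completeBipartiteGraph α β) f ↔ IsSEDFMatrix fun i j => f (bipartiteEdge (i, j)) := by
  simp only [IsSEDF, IsSEDFMatrix, edgeFin_completeBipartiteGraph, forall_mem_map, mem_univ,
    forall_const, Prod.forall, closedNbhd_completeBipartiteGraph, sum_map]
  simp only [sum_filter_fst_eq_or_snd_eq fun q => f (bipartiteEdge q)]

lemma gammaS_completeBipartiteGraph :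
    gammaS (completeBipartiteGraph α β) =
      sInf {z | ∃ g : α → β → ℤ, IsSEDFMatrix g ∧ z = ∑ i, ∑ j, g i j} := by
  rw [gammaS]
  congr 1
  ext z
  constructor
  · rintro ⟨f, hf, rfl⟩
    exact ⟨_, (isSEDF_completeBipartiteGraph_iff f).1 hf, sum_edgeFin_completeBipartiteGraph f⟩
  · rintro ⟨g, hg, rfl⟩
    exact ⟨edgeFunOfMatrix g, (isSEDF_completeBipartiteGraph_iff _).2 hg,
      (sum_edgeFin_completeBipartiteGraph (edgeFunOfMatrix g)).symm⟩

end CompleteBipartite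

def halfSign (k : ℕ) (i : Fin (2 * k + 1)) : ℤ := if (i : ℕ) ≤ k then 1 else -1

lemma halfSign_eq_one_or_eq_neg_one (k : ℕ) (i : Fin (2 * k + 1)) :
    halfSign k i = 1 ∨ halfSign k i = -1 := by
  unfold halfSign
  split_ifs <;> simp

lemma sum_halfSign (k : ℕ) : ∑ i, halfSign k i = 1 := by
  unfold halfSign
  rw [Fin.sum_univ_eq_sum_range (fun i => if i ≤ k then (1 : ℤ) else -1),
    show 2 * k + 1 = (k + 1) + k by ring, sum_range_add,
    sum_congr rfl fun x hx => if_pos (Nat.lt_succ_iff.mp (mem_range.mp hx)),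
    sum_congr rfl fun x _ => if_neg (by omega)]
  simp

lemma halfSign_add_halfSign_rev_nonneg (k : ℕ) (i : Fin (2 * k + 1)) :
    0 ≤ halfSign k i + halfSign k i.rev := by
  simp only [halfSign, Fin.val_rev]
  split_ifs <;> omega

def circulantMatrix (k s : ℕ) : Fin (2 * k + 1) → Fin (2 * k + 1) ⊕ Fin s × Bool → ℤ
  | i, .inl j => halfSign k (i + j)
  | i, .inr (_, true) => halfSign k i
  | i, .inr (_, false) => halfSign k i.rev

lemma sum_circulantMatrix_col (k s : ℕ) (j : Fin (2 * k + 1) ⊕ Fin s × Bool) :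
    ∑ i, circulantMatrix k s i j = 1 := by
  rcases j with j | ⟨_, _ | _⟩
  · exact (Equiv.sum_comp (Equiv.addRight j) (halfSign k)).trans (sum_halfSign k)
  · exact (Equiv.sum_comp Fin.revPerm (halfSign k)).trans (sum_halfSign k)
  · exact sum_halfSign k

lemma one_le_sum_circulantMatrix_row (k s : ℕ) (i : Fin (2 * k + 1)) :
    1 ≤ ∑ j, circulantMatrix k s i j := by
  have hcirc : ∑ j, halfSign k (i + j) = 1 :=
    (Equiv.sum_comp (Equiv.addLeft i) (halfSign k)).trans (sum_halfSign k)
  simp only [Fintype.sum_sum_type, Fintype.sum_prod_type, Fintype.sum_bool, circulantMatrix,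
    hcirc, sum_const, card_univ, Fintype.card_fin, nsmul_eq_mul]
  linarith [mul_nonneg (Nat.cast_nonneg (α := ℤ) s) (halfSign_add_halfSign_rev_nonneg k i)]

lemma isSEDFMatrix_circulantMatrix (k s : ℕ) : IsSEDFMatrix (circulantMatrix k s) :=
  .of_one_le_sums
    (fun i j => by rcases j with _ | ⟨_, _ | _⟩ <;> exact halfSign_eq_one_or_eq_neg_one _ _)
    (one_le_sum_circulantMatrix_row k s) (fun j => (sum_circulantMatrix_col k s j).ge)

lemma sum_circulantMatrix (k s : ℕ) :
    ∑ i, ∑ j, circulantMatrix k s i j = 2 * k + 1 + 2 * s := by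
  rw [sum_comm]
  simp only [sum_circulantMatrix_col, sum_const, card_univ, Fintype.card_sum, Fintype.card_fin,
    Fintype.card_prod, Fintype.card_bool, nsmul_eq_mul, mul_one]
  push_cast
  ring

lemma sum_ite_eq_one_neg_one {ι : Type*} [Fintype ι] [DecidableEq ι] (b : ι) :
    ∑ c, (if b = c then 1 else -1 : ℤ) = 2 - Fintype.card ι := by
  calc ∑ c, (if b = c then 1 else -1 : ℤ) = ∑ c, ((if b = c then 2 else 0) - 1) :=
        sum_congr rfl fun c _ => by split_ifs <;> norm_num
    _ = 2 - Fintype.card ι := by simp [sum_sub_distrib]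

lemma sum_ite_eq_one_neg_one' {ι : Type*} [Fintype ι] [DecidableEq ι] (b : ι) :
    ∑ c, (if c = b then 1 else -1 : ℤ) = 2 - Fintype.card ι := by
  simp_rw [eq_comm (a := _) (b := b)]
  exact sum_ite_eq_one_neg_one b

def blockMatrix (k u : ℕ) :
    Fin k ⊕ Fin (k + 1) → Fin (u + 1) ⊕ (Fin (k + 1) × Bool) ⊕ Fin (u + 2 * k) → ℤ
  | .inl _, .inr (.inr _) => -1
  | .inl _, _ => 1
  | .inr _, .inl _ => -1
  | .inr b, .inr (.inl (c, _)) => if b = c then 1 else -1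
  | .inr _, .inr (.inr _) => 1

lemma sum_blockMatrix_row (k u : ℕ) (i : Fin k ⊕ Fin (k + 1)) :
    ∑ j, blockMatrix k u i j = if i.isLeft then 3 else 1 := by
  rcases i with a | b <;>
    simp only [Fintype.sum_sum_type, Fintype.sum_prod_type, Fintype.sum_bool, blockMatrix,
      sum_add_distrib, sum_ite_eq_one_neg_one, sum_const, card_univ, Fintype.card_fin,
      Fintype.card_prod, Fintype.card_bool, nsmul_eq_mul, Sum.isLeft_inl, Sum.isLeft_inr] <;>
    push_cast <;> ring

lemma sum_blockMatrix_col (k u : ℕ) (j : Fin (u + 1) ⊕ (Fin (k + 1) × Bool) ⊕ Fin (u + 2 * k)) :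
    ∑ i, blockMatrix k u i j = if j.isLeft then -1 else 1 := by
  rcases j with x | ⟨c, _⟩ | y <;>
    simp only [Fintype.sum_sum_type, blockMatrix, sum_ite_eq_one_neg_one', sum_const,
      card_univ, Fintype.card_fin, nsmul_eq_mul, Sum.isLeft_inl, Sum.isLeft_inr] <;>
    push_cast <;> ring

lemma isSEDFMatrix_blockMatrix (k u : ℕ) : IsSEDFMatrix (blockMatrix k u) := by
  refine ⟨fun i j => ?_, fun i j => ?_⟩
  · rcases i with a | b <;> rcases j with x | ⟨c, _⟩ | y <;> simp [blockMatrix, em]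
  · rw [sum_blockMatrix_row, sum_blockMatrix_col]
    rcases i with a | b <;> rcases j with x | ⟨c, _⟩ | y <;> simp only [blockMatrix] <;>
      split_ifs <;> simp_all

lemma sum_blockMatrix (k u : ℕ) : ∑ i, ∑ j, blockMatrix k u i j = 4 * k + 1 := by
  simp only [sum_blockMatrix_row]
  rw [Fintype.sum_sum_type]
  simp only [Sum.isLeft_inl, Sum.isLeft_inr, Bool.false_eq_true, ↓reduceIte, sum_const,
    card_univ, Fintype.card_fin, nsmul_eq_mul]
  push_cast
  ring

lemma exists_isSEDFMatrix_sum_eq_card {m n : ℕ} (hmn : m ≤ n) (hm : Odd m) (hn : Odd n) :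
    ∃ g : Fin m → Fin n → ℤ, IsSEDFMatrix g ∧ ∑ i, ∑ j, g i j = n := by
  obtain ⟨k, rfl⟩ := hm
  obtain ⟨s, rfl⟩ : ∃ s, n = 2 * k + 1 + 2 * s :=
    ⟨(n - (2 * k + 1)) / 2, by obtain ⟨l, rfl⟩ := hn; omega⟩
  obtain ⟨g, hg, hsum⟩ := (isSEDFMatrix_circulantMatrix k s).exists_fin
    (m := 2 * k + 1) (n := 2 * k + 1 + 2 * s) (Fintype.card_fin _)
    (by simp only [Fintype.card_sum, Fintype.card_fin, Fintype.card_prod, Fintype.card_bool]; ring)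
  exact ⟨g, hg, by rw [hsum, sum_circulantMatrix]; push_cast; ring⟩

lemma exists_isSEDFMatrix_sum_eq_two_mul_sub_one {m n : ℕ} (hmn : 2 * m < n) (hm : Odd m)
    (hn : Odd n) : ∃ g : Fin m → Fin n → ℤ, IsSEDFMatrix g ∧ ∑ i, ∑ j, g i j = 2 * m - 1 := by
  obtain ⟨k, rfl⟩ := hm
  obtain ⟨u, rfl⟩ : ∃ u, n = 4 * k + 2 * u + 3 :=
    ⟨(n - (4 * k + 3)) / 2, by obtain ⟨l, rfl⟩ := hn; omega⟩
  obtain ⟨g, hg, hsum⟩ := (isSEDFMatrix_blockMatrix k u).exists_fin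
    (m := 2 * k + 1) (n := 4 * k + 2 * u + 3)
    (by simp only [Fintype.card_sum, Fintype.card_fin]; ring)
    (by simp only [Fintype.card_sum, Fintype.card_fin, Fintype.card_prod, Fintype.card_bool]; ring)
  exact ⟨g, hg, by rw [hsum, sum_blockMatrix]; push_cast; ring⟩

theorem stmt14 (m n : ℕ) (hmn : m ≤ n) (hm : Odd m) (hn : Odd n) :
    gammaS (completeBipartiteGraph (Fin m) (Fin n)) = min (2 * (m : ℤ) - 1) (n : ℤ) := by
  have hm₁ := hm.pos
  rw [gammaS_completeBipartiteGraph]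
  refine IsLeast.csInf_eq ⟨?_, ?_⟩
  · obtain ⟨g, hg, hsum⟩ : ∃ g : Fin m → Fin n → ℤ, IsSEDFMatrix g ∧
        ∑ i, ∑ j, g i j = min (2 * (m : ℤ) - 1) (n : ℤ) := by
      rcases le_or_gt n (2 * m - 1) with hsmall | hlarge
      · rw [min_eq_right (by omega)]
        exact exists_isSEDFMatrix_sum_eq_card hmn hm hn
      · rw [min_eq_left (by omega)]
        exact exists_isSEDFMatrix_sum_eq_two_mul_sub_one (by obtain ⟨l, rfl⟩ := hn; omega) hm hn
    exact ⟨g, hg, hsum.symm⟩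
  · rintro z ⟨g, hg, rfl⟩
    simpa using hg.min_le_sum (by simpa using hm)
end
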